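/- Let (𝒫,𝒬) be a strong parallelepiped structure on a nonempty set X, with base B, fiber group F, and structure group 𝒢. Then 𝒢 acts transitively on X if and only if for every s ∈ B the exact sequence 0 → F → P_s → B → 0 splits, i.e. there exists a group homomorphism φ: B → P_s with q_s ∘ φ = id_B. -/

import Mathlib

open scoped Pointwise

namespace HK

/-- Quadruples of elements of `X`, indexed by the vertices `00, 01, 10, 11` of the square. -/
abbrev Quad (X : Type) := X × X × X × X

/-- Vertices of the cube `{0,1}³`. -/
abbrev Vtx := Fin 3 → Bool

/-- Elements of `X^{[3]} = X⁸`, indexed by the vertices of the cube. -/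
abbrev Cube (X : Type) := Vtx → X

variable {X Y : Type}

/-- Apply a map coordinatewise to a quadruple. -/
def map4 (f : X → Y) (p : Quad X) : Quad Y := (f p.1, f p.2.1, f p.2.2.1, f p.2.2.2)

/-- Apply a map coordinatewise to a cube. -/
def mapCube (f : X → Y) (x : Cube X) : Cube Y := fun v => f (x v)

/-- A weak parallelogram structure: the relation `(x00,x01) ∼ (x10,x11) ↔ (x00,x01,x10,x11) ∈ P`
is an equivalence relation, `P` is invariant under exchanging the two middle entries, and
any three points can be completed to a parallelogram. -/
def IsWeakParallelogram (P : Set (Quad X)) : Prop :=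
  (∀ a b : X, (a, b, a, b) ∈ P) ∧
  (∀ a b c d : X, (a, b, c, d) ∈ P → (c, d, a, b) ∈ P) ∧
  (∀ a b c d e f : X, (a, b, c, d) ∈ P → (c, d, e, f) ∈ P → (a, b, e, f) ∈ P) ∧
  (∀ a b c d : X, (a, b, c, d) ∈ P → (a, c, b, d) ∈ P) ∧
  (∀ a b c : X, ∃ d, (a, b, c, d) ∈ P)

/-- A strong parallelogram structure: the completing fourth point is unique. -/
def IsStrongParallelogram (P : Set (Quad X)) : Prop :=
  IsWeakParallelogram P ∧ ∀ a b c : X, ∃! d, (a, b, c, d) ∈ P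

/-- The entry of a quadruple at a vertex of the square. -/
def quadAt (p : Quad X) : Bool → Bool → X
  | false, false => p.1
  | false, true => p.2.1
  | true, false => p.2.2.1
  | true, true => p.2.2.2

/-- The cube whose face `ε₁ = 0` is `p` and whose face `ε₁ = 1` is `q`. -/
def joinQuad (p q : Quad X) : Cube X :=
  fun v => if v 0 = false then quadAt p (v 1) (v 2) else quadAt q (v 1) (v 2)

/-- The vertex of the cube with value `b` at coordinate `i` and values `u,v` at the two
remaining coordinates, taken in increasing order. -/
def insert3 (i : Fin 3) (b u v : Bool) : Vtx :=
  if i = 0 then ![b, u, v] else if i = 1 then ![u, b, v] else ![u, v, b]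

/-- The face `{v : v i = b}` of a cube, as a quadruple in lexicographic order. -/
def face (x : Cube X) (i : Fin 3) (b : Bool) : Quad X :=
  (x (insert3 i b false false), x (insert3 i b false true),
   x (insert3 i b true false), x (insert3 i b true true))

/-- The permutations of the vertices of the cube induced by Euclidean isometries of the unit
cube: a permutation of the three coordinates composed with flips of some coordinates. -/
def cubeSym (σ : Equiv.Perm (Fin 3)) (c : Vtx) (v : Vtx) : Vtx :=
  fun j => xor (v (σ j)) (c j)

/-- A weak parallelepiped structure `(P, Q)`: every face of an element of `Q` lies in `P`;
`Q` is invariant under the Euclidean permutations of the cube; the relation `≈` on `P`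
(`p ≈ q ↔ joinQuad p q ∈ Q`) is an equivalence relation; and seven points whose three
determined faces lie in `P` can be completed to an element of `Q`. -/
def IsWeakParallelepiped (P : Set (Quad X)) (Q : Set (Cube X)) : Prop :=
  IsWeakParallelogram P ∧
  (∀ x ∈ Q, ∀ (i : Fin 3) (b : Bool), face x i b ∈ P) ∧
  (∀ (σ : Equiv.Perm (Fin 3)) (c : Vtx), ∀ x ∈ Q, (fun v => x (cubeSym σ c v)) ∈ Q) ∧
  (∀ p ∈ P, joinQuad p p ∈ Q) ∧
  (∀ p q : Quad X, joinQuad p q ∈ Q → joinQuad q p ∈ Q) ∧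
  (∀ p q r : Quad X, joinQuad p q ∈ Q → joinQuad q r ∈ Q → joinQuad p r ∈ Q) ∧
  (∀ x000 x001 x010 x011 x100 x101 x110 : X,
    (x000, x001, x010, x011) ∈ P → (x000, x010, x100, x110) ∈ P →
    (x000, x001, x100, x101) ∈ P →
    ∃ x111, joinQuad (x000, x001, x010, x011) (x100, x101, x110, x111) ∈ Q)

/-- A strong parallelepiped structure: the completing eighth point is unique. -/
def IsStrongParallelepiped (P : Set (Quad X)) (Q : Set (Cube X)) : Prop :=
  IsWeakParallelepiped P Q ∧
  ∀ x000 x001 x010 x011 x100 x101 x110 : X,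
    (x000, x001, x010, x011) ∈ P → (x000, x010, x100, x110) ∈ P →
    (x000, x001, x100, x101) ∈ P →
    ∃! x111, joinQuad (x000, x001, x010, x011) (x100, x101, x110, x111) ∈ Q

/-- The setoid on `X²` given by the parallelogram relation `∼`. -/
def baseSetoid (P : Set (Quad X)) (hP : IsWeakParallelogram P) : Setoid (X × X) where
  r p q := (p.1, p.2, q.1, q.2) ∈ P
  iseqv := ⟨fun p => hP.1 p.1 p.2,
            fun h => hP.2.1 _ _ _ _ h,
            fun h h' => hP.2.2.1 _ _ _ _ _ _ h h'⟩

/-- The base `B = X²/∼` of a weak parallelogram structure. -/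
def Base (P : Set (Quad X)) (hP : IsWeakParallelogram P) : Type := Quotient (baseSetoid P hP)

/-- The class `⟨x,y⟩ ∈ B` of a pair `(x,y)`. -/
def cls (P : Set (Quad X)) (hP : IsWeakParallelogram P) (x y : X) : Base P hP :=
  Quotient.mk (baseSetoid P hP) (x, y)

/-- The Gowers-type sum over parallelograms attached to a finitely supported `f : X → ℂ`. -/
noncomputable def gSum2 (P : Set (Quad X)) (f : X →₀ ℂ) : ℂ :=
  ∑ᶠ q ∈ P, f q.1 * (starRingEnd ℂ) (f q.2.1) * (starRingEnd ℂ) (f q.2.2.1) * f q.2.2.2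

/-- The seminorm `‖f‖_P = (gSum2 P f)^{1/4}`. -/
noncomputable def pNorm (P : Set (Quad X)) (f : X →₀ ℂ) : ℝ :=
  (gSum2 P f).re ^ ((1 : ℝ) / 4)

/-- `C^{|ε|} z`: conjugate `z` when the vertex `v` has an odd number of `1` entries. -/
noncomputable def cConjFactor (v : Vtx) (z : ℂ) : ℂ :=
  if xor (v 0) (xor (v 1) (v 2)) then (starRingEnd ℂ) z else z

/-- The Gowers-type sum over parallelepipeds attached to a finitely supported `f : X → ℂ`. -/
noncomputable def gSum3 (Q : Set (Cube X)) (f : X →₀ ℂ) : ℂ :=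
  ∑ᶠ x ∈ Q, ∏ v : Vtx, cConjFactor v (f (x v))

/-- The seminorm `‖f‖_Q = (gSum3 Q f)^{1/8}`. -/
noncomputable def qNorm (Q : Set (Cube X)) (f : X →₀ ℂ) : ℝ :=
  (gSum3 Q f).re ^ ((1 : ℝ) / 8)

/-- The structure group of a parallelepiped structure, as a set of bijections of `X`:
those `g` mapping every parallelogram to an equivalent parallelogram. -/
def structSet (P : Set (Quad X)) (Q : Set (Cube X)) : Set (Equiv.Perm X) :=
  {g | ∀ p ∈ P, map4 g p ∈ P ∧ joinQuad (map4 g p) p ∈ Q}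

/-- `x` and `y` lie in the same fiber of `π : X → B`, `π(x) = ⟨i,x⟩`. -/
def sameFiber (P : Set (Quad X)) (i x y : X) : Prop := (i, x, i, y) ∈ P

/-- A vertical quadruple: all four points lie in one fiber. -/
def VerticalQ (P : Set (Quad X)) (i : X) (w : Quad X) : Prop :=
  sameFiber P i w.1 w.2.1 ∧ sameFiber P i w.2.1 w.2.2.1 ∧ sameFiber P i w.2.2.1 w.2.2.2

/-- `y = u·x` where `u = [w]` is the class of the vertical parallelogram `w`:
`(x,x,x,y)` is a parallelogram equivalent to `w`. -/
def actsRel (P : Set (Quad X)) (Q : Set (Cube X)) (w : Quad X) (x y : X) : Prop :=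
  (x, x, x, y) ∈ P ∧ joinQuad (x, x, x, y) w ∈ Q

section Groups

variable (G : Type) [Group G]

/-- The diagonal embedding `G → G^{[2]}`. -/
def diagHom2 : G →* Quad G where
  toFun g := (g, g, g, g)
  map_one' := rfl
  map_mul' _ _ := rfl

/-- The diagonal embedding `G → G^{[3]}`. -/
def diagHom3 : G →* Cube G where
  toFun g := fun _ => g
  map_one' := rfl
  map_mul' _ _ := rfl

/-- The two dimensional edge group `G^{[2,1]}`. -/
def edgeGroup2 : Subgroup (Quad G) :=
  Subgroup.closure
    {q : Quad G | ∃ g : G, q = (g, g, 1, 1) ∨ q = (g, 1, g, 1) ∨ q = (g, g, g, g)}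

/-- The second commutator subgroup `G₃ = [G, G₂]`. -/
def secondCommutator : Subgroup G := ⁅(⊤ : Subgroup G), commutator G⁆

variable {G}

/-- The edge group `F^{[2,1]}` of a subgroup `F ≤ G`, inside `G^{[2]}`. -/
def edgeGroup2Of (F : Subgroup G) : Subgroup (Quad G) :=
  Subgroup.closure
    {q : Quad G | ∃ u ∈ F, q = (u, u, 1, 1) ∨ q = (u, 1, u, 1) ∨ q = (u, u, u, u)}

/-- `F^{[2]} = F⁴` as a subgroup of `G^{[2]}`. -/
def quadSub (F : Subgroup G) : Subgroup (Quad G) := F.prod (F.prod (F.prod F))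

/-- Faces of the cube `{0,1}³`. -/
def IsFace3 (α : Set Vtx) : Prop := ∃ (i : Fin 3) (b : Bool), α = {v : Vtx | v i = b}

/-- Edges of the cube `{0,1}³`. -/
def IsEdge3 (α : Set Vtx) : Prop :=
  ∃ (i j : Fin 3) (b c : Bool), i ≠ j ∧ α = {v : Vtx | v i = b ∧ v j = c}

open Classical in
/-- The element `g^{[3,α]}` of `G^{[3]}`, with coordinate `g` on `α` and `1` elsewhere. -/
noncomputable def cubeElt (α : Set Vtx) (g : G) : Cube G :=
  fun v => if v ∈ α then g else 1

variable (G)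

/-- The face group `G^{[3,2]}`, generated by the `g^{[3,f]}` for faces `f` of the cube. -/
noncomputable def faceGroup : Subgroup (Cube G) :=
  Subgroup.closure {x : Cube G | ∃ (g : G) (α : Set Vtx), IsFace3 α ∧ x = cubeElt α g}

variable {G}

/-- The edge group `F^{[3,1]}` of a subgroup `F ≤ G`, generated by the `u^{[3,e]}` for
`u ∈ F` and edges `e` of the cube. -/
noncomputable def edgeGroup3 (F : Subgroup G) : Subgroup (Cube G) :=
  Subgroup.closure {x : Cube G | ∃ u ∈ F, ∃ α : Set Vtx, IsEdge3 α ∧ x = cubeElt α u}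

end Groups

/-- The data realizing `(PY, QY)` as the nilparallelepiped structure associated to
`G`, `F`, `Γ` via the coset projection `p : G → Y ≅ G/Γ`. -/
def NilWitness (G : Type) [Group G] (F Γ : Subgroup G) {Y : Type} (p : G → Y)
    (PY : Set (Quad Y)) (QY : Set (Cube Y)) : Prop :=
  commutator G ≤ F ∧ F ≤ Subgroup.center G ∧ Γ ⊓ F = ⊥ ∧
  Function.Surjective p ∧ (∀ g g' : G, p g = p g' ↔ g⁻¹ * g' ∈ Γ) ∧
  PY = map4 p '' ((edgeGroup2 G : Set (Quad G)) * (quadSub F : Set (Quad G))) ∧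
  QY = mapCube p '' ((faceGroup G : Set (Cube G)) * (edgeGroup3 F : Set (Cube G)))

/-- `(PY, QY)` is a nilparallelepiped structure. -/
def IsNilStructure {Y : Type} (PY : Set (Quad Y)) (QY : Set (Cube Y)) : Prop :=
  ∃ (G : Type) (inst : Group G) (F Γ : @Subgroup G inst) (p : G → Y),
    @NilWitness G inst F Γ Y p PY QY

/-- A splitting of the exact sequence `0 → F → P_s → B → 0` for `s = ⟨a₀, b₀⟩`, encoded
by a lift `ψ : X → 𝒫_s` of a homomorphism section `φ : B → P_s` of `q_s`:
`ψ x` is a parallelogram in `𝒫_s` representing the class `φ(π(x))`. -/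
def IsSplittingAt (P : Set (Quad X)) (Q : Set (Cube X)) (i a₀ b₀ : X) : Prop :=
  ∃ ψ : X → Quad X,
    (∀ x, ψ x ∈ P) ∧
    (∀ x, (a₀, b₀, (ψ x).1, (ψ x).2.1) ∈ P) ∧
    (∀ x, ((ψ x).1, (ψ x).2.2.1, i, x) ∈ P) ∧
    (∀ x y, (i, x, i, y) ∈ P → joinQuad (ψ x) (ψ y) ∈ Q) ∧
    (∀ x1 x2 x3, (x1, x3, i, x2) ∈ P →
      ∃ c d, joinQuad ((ψ x1).2.2.1, (ψ x1).2.2.2, c, d) (ψ x2) ∈ Q ∧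
        joinQuad ((ψ x1).1, (ψ x1).2.1, c, d) (ψ x3) ∈ Q)

/-- `(B, c)` is a realization of the base group of the parallelogram structure `P`,
`c x y` realizing the class `⟨x,y⟩`. -/
def IsBaseRealization (P : Set (Quad X)) (B : Type) [AddCommGroup B] (c : X → X → B) : Prop :=
  (Function.Surjective fun p : X × X => c p.1 p.2) ∧
  (∀ a b a' b' : X, c a b = c a' b' ↔ (a, b, a', b') ∈ P) ∧
  (∀ a b d : X, c a b + c b d = c a d)

/-- `(F, fl)` is a realization of the fiber group of the parallelepiped structure `(P, Q)`:
`fl` maps vertical parallelograms onto `F`, separates exactly the `≈`-classes, and is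
additive with respect to the composition of vertical parallelograms. -/
def IsFiberRealization (P : Set (Quad X)) (Q : Set (Cube X)) (i : X) (F : Type)
    [AddCommGroup F] (fl : Quad X → F) : Prop :=
  (∀ u : F, ∃ w, VerticalQ P i w ∧ fl w = u) ∧
  (∀ w w' : Quad X, VerticalQ P i w → VerticalQ P i w' →
    (fl w = fl w' ↔ joinQuad w w' ∈ Q)) ∧
  (∀ x0 x1 x2 x3 x4 x5 : X, sameFiber P i x0 x1 → sameFiber P i x1 x2 →
    sameFiber P i x2 x3 → sameFiber P i x3 x4 → sameFiber P i x4 x5 →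
    fl (x0, x1, x2, x3) + fl (x2, x3, x4, x5) = fl (x0, x1, x4, x5))

/-- A divisible (equivalently, injective) abelian group. -/
def IsDivisibleGroup (F : Type) [AddCommGroup F] : Prop :=
  ∀ (u : F) (n : ℕ), 0 < n → ∃ v : F, n • v = u

/-- A projective abelian group (projective as a `ℤ`-module). -/
def IsProjectiveAdd (B : Type) [AddCommGroup B] : Prop := Module.Projective ℤ B


/-!
An element `g` of the structure group with `g a₀ = b₀` gives the splitting
`⟨i, x⟩ ↦ [i, g i, x, g x]`. Conversely, given a splitting `φ` at `s = ⟨x, y⟩`, fix `w` and let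
`g z` be the unique point with `(i, w, z, g z) ≈ φ(π z)`. Since `φ` is a homomorphism,
`φ(⟨a, b⟩) = [a, g a, b, g b]` for all `a, b`, so `g` maps every parallelogram to an equivalent
one. Any such map of a strong structure is bijective: injective because the eighth vertex of a
parallelepiped is unique, surjective because it commutes with the action of `F` on each fiber.
Choosing `w` with `(i, w, x, y) ≈ φ(π x)` makes `g x = y`.
-/

section StructureGroup

variable {P : Set (Quad X)} {Q : Set (Cube X)}

namespace IsWeakParallelogram

theorem refl (hP : IsWeakParallelogram P) (a b : X) : (a, b, a, b) ∈ P := hP.1 a b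

theorem symm (hP : IsWeakParallelogram P) {a b c d : X} (h : (a, b, c, d) ∈ P) :
    (c, d, a, b) ∈ P :=
  hP.2.1 a b c d h

theorem trans (hP : IsWeakParallelogram P) {a b c d e f : X} (h₁ : (a, b, c, d) ∈ P)
    (h₂ : (c, d, e, f) ∈ P) : (a, b, e, f) ∈ P :=
  hP.2.2.1 a b c d e f h₁ h₂

theorem transpose (hP : IsWeakParallelogram P) {a b c d : X} (h : (a, b, c, d) ∈ P) :
    (a, c, b, d) ∈ P :=
  hP.2.2.2.1 a b c d h

theorem exists_complete (hP : IsWeakParallelogram P) (a b c : X) : ∃ d, (a, b, c, d) ∈ P :=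
  hP.2.2.2.2 a b c

theorem reverse (hP : IsWeakParallelogram P) {a b c d : X} (h : (a, b, c, d) ∈ P) :
    (b, a, d, c) ∈ P :=
  hP.transpose (hP.symm (hP.transpose h))

theorem refl' (hP : IsWeakParallelogram P) (a b : X) : (a, a, b, b) ∈ P :=
  hP.transpose (hP.refl a b)

end IsWeakParallelogram

namespace IsWeakParallelepiped

theorem refl (hQ : IsWeakParallelepiped P Q) {p : Quad X} (h : p ∈ P) : joinQuad p p ∈ Q :=
  hQ.2.2.2.1 p h

theorem symm (hQ : IsWeakParallelepiped P Q) {p q : Quad X} (h : joinQuad p q ∈ Q) :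
    joinQuad q p ∈ Q :=
  hQ.2.2.2.2.1 p q h

theorem trans (hQ : IsWeakParallelepiped P Q) {p q r : Quad X} (h₁ : joinQuad p q ∈ Q)
    (h₂ : joinQuad q r ∈ Q) : joinQuad p r ∈ Q :=
  hQ.2.2.2.2.2.1 p q r h₁ h₂

theorem exists_complete (hQ : IsWeakParallelepiped P Q) {x000 x001 x010 x011 x100 x101 x110 : X}
    (h₀ : (x000, x001, x010, x011) ∈ P) (h₁ : (x000, x010, x100, x110) ∈ P)
    (h₂ : (x000, x001, x100, x101) ∈ P) :
    ∃ x111, joinQuad (x000, x001, x010, x011) (x100, x101, x110, x111) ∈ Q :=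
  hQ.2.2.2.2.2.2 _ _ _ _ _ _ _ h₀ h₁ h₂

theorem mem_of_cubeSym (hQ : IsWeakParallelepiped P Q) (σ : Equiv.Perm (Fin 3)) (c : Vtx)
    {p q p' q' : Quad X} (hsym : ∀ v, joinQuad p q (cubeSym σ c v) = joinQuad p' q' v)
    (h : joinQuad p q ∈ Q) : joinQuad p' q' ∈ Q := by
  simpa only [hsym] using hQ.2.2.1 σ c _ h

variable {a b c d e f g h : X}

theorem swap01 (hQ : IsWeakParallelepiped P Q) (H : joinQuad (a, b, c, d) (e, f, g, h) ∈ Q) :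
    joinQuad (a, b, e, f) (c, d, g, h) ∈ Q :=
  hQ.mem_of_cubeSym (Equiv.swap 0 1) (fun _ => false) (fun v => by
    cases h0 : v 0 <;> cases h1 : v 1 <;> cases h2 : v 2 <;>
      simp [joinQuad, quadAt, cubeSym, h0, h1, h2, Equiv.swap_apply_of_ne_of_ne]) H

theorem swap12 (hQ : IsWeakParallelepiped P Q) (H : joinQuad (a, b, c, d) (e, f, g, h) ∈ Q) :
    joinQuad (a, c, b, d) (e, g, f, h) ∈ Q :=
  hQ.mem_of_cubeSym (Equiv.swap 1 2) (fun _ => false) (fun v => by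
    cases h0 : v 0 <;> cases h1 : v 1 <;> cases h2 : v 2 <;>
      simp [joinQuad, quadAt, cubeSym, h0, h1, h2, Equiv.swap_apply_of_ne_of_ne]) H

theorem flip1 (hQ : IsWeakParallelepiped P Q) (H : joinQuad (a, b, c, d) (e, f, g, h) ∈ Q) :
    joinQuad (c, d, a, b) (g, h, e, f) ∈ Q :=
  hQ.mem_of_cubeSym 1 (fun j => decide (j = 1)) (fun v => by
    cases h0 : v 0 <;> cases h1 : v 1 <;> cases h2 : v 2 <;>
      simp [joinQuad, quadAt, cubeSym, h0, h1, h2]) H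

theorem rotate_iff (hQ : IsWeakParallelepiped P Q) :
    joinQuad (a, b, c, d) (e, f, g, h) ∈ Q ↔ joinQuad (a, e, b, f) (c, g, d, h) ∈ Q :=
  ⟨fun H => hQ.swap12 (hQ.swap01 H), fun H => hQ.swap01 (hQ.swap12 H)⟩

theorem comp (hQ : IsWeakParallelepiped P Q) {a' b' e' f' g' h' : X}
    (H₁ : joinQuad (a, b, e, f) (a', b', e', f') ∈ Q)
    (H₂ : joinQuad (e, f, g, h) (e', f', g', h') ∈ Q) :
    joinQuad (a, b, g, h) (a', b', g', h') ∈ Q :=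
  hQ.swap01 (hQ.trans (hQ.swap01 H₁) (hQ.swap01 H₂))

theorem left_mem (hQ : IsWeakParallelepiped P Q) {p q : Quad X} (H : joinQuad p q ∈ Q) :
    p ∈ P :=
  hQ.2.1 _ H 0 false

theorem right_mem (hQ : IsWeakParallelepiped P Q) {p q : Quad X} (H : joinQuad p q ∈ Q) :
    q ∈ P :=
  hQ.2.1 _ H 0 true

theorem lower_mem (hQ : IsWeakParallelepiped P Q) (H : joinQuad (a, b, c, d) (e, f, g, h) ∈ Q) :
    (a, b, e, f) ∈ P :=
  hQ.2.1 _ H 1 false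

theorem front_mem (hQ : IsWeakParallelepiped P Q) (H : joinQuad (a, b, c, d) (e, f, g, h) ∈ Q) :
    (a, c, e, g) ∈ P :=
  hQ.2.1 _ H 2 false

end IsWeakParallelepiped

namespace IsStrongParallelepiped

theorem existsUnique (hs : IsStrongParallelepiped P Q)
    {x000 x001 x010 x011 x100 x101 x110 : X}
    (h₀ : (x000, x001, x010, x011) ∈ P) (h₁ : (x000, x010, x100, x110) ∈ P)
    (h₂ : (x000, x001, x100, x101) ∈ P) :
    ∃! x111, joinQuad (x000, x001, x010, x011) (x100, x101, x110, x111) ∈ Q :=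
  hs.2 _ _ _ _ _ _ _ h₀ h₁ h₂

theorem eq_of_mem (hs : IsStrongParallelepiped P Q) {a b c d e f g h h' : X}
    (H : joinQuad (a, b, c, d) (e, f, g, h) ∈ Q) (H' : joinQuad (a, b, c, d) (e, f, g, h') ∈ Q) :
    h = h' :=
  (hs.existsUnique (hs.1.left_mem H) (hs.1.front_mem H) (hs.1.lower_mem H)).unique H H'

end IsStrongParallelepiped

/-- The condition defining the structure group, without bijectivity: in a strong structure it
forces bijectivity (`IsStructMap.bijective`). -/
def IsStructMap (P : Set (Quad X)) (Q : Set (Cube X)) (f : X → X) : Prop :=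
  ∀ p ∈ P, joinQuad (map4 f p) p ∈ Q

theorem mem_structSet_iff (hQ : IsWeakParallelepiped P Q) {g : Equiv.Perm X} :
    g ∈ structSet P Q ↔ IsStructMap P Q g :=
  ⟨fun hg p hp => (hg p hp).2, fun hg p hp => ⟨hQ.left_mem (hg p hp), hg p hp⟩⟩

theorem isStructMap_iff (hQ : IsWeakParallelepiped P Q) {f : X → X} :
    IsStructMap P Q f ↔ ∀ z z' w w' : X, (z, z', w, w') ∈ P →
      joinQuad (z, f z, z', f z') (w, f w, w', f w') ∈ Q := by
  refine ⟨fun hf z z' w w' hp => ?_, fun hf ⟨a, b, c, d⟩ hp => ?_⟩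
  · exact hQ.rotate_iff.1 (hQ.symm (hf _ hp))
  · exact hQ.symm (hQ.rotate_iff.2 (hf a b c d hp))

namespace IsStructMap

variable {f : X → X}

theorem mem (hQ : IsWeakParallelepiped P Q) (hf : IsStructMap P Q f) (z z' : X) :
    (z, f z, z', f z') ∈ P :=
  hQ.left_mem ((isStructMap_iff hQ).1 hf z z' z z' (hQ.1.refl z z'))

theorem injective (hs : IsStrongParallelepiped P Q) (hf : IsStructMap P Q f) :
    Function.Injective f := by
  have hP := hs.1.1
  intro z z' hzz'
  have hpair : (z, f z, z', f z) ∈ P := hzz' ▸ hf.mem hs.1 z z'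
  have hvert : (z, z, z, z') ∈ P := hP.trans (hP.refl' z (f z)) (hP.symm (hP.transpose hpair))
  have H := hf _ hvert
  simp only [map4, ← hzz'] at H
  exact hs.eq_of_mem (hf _ (hP.refl z z)) H

theorem surjective (hs : IsStrongParallelepiped P Q) (hf : IsStructMap P Q f) :
    Function.Surjective f := by
  have hQ := hs.1
  have hP := hQ.1
  intro v
  -- first a point `z` whose image lies in the fiber of `v`, then move inside that fiber
  obtain ⟨z, hz⟩ := hP.exists_complete (f v) v v
  have hvert : (f z, f z, f z, v) ∈ P :=
    hP.trans (hP.refl' (f z) z)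
      (hP.transpose (hP.trans (hP.symm (hf.mem hQ v z)) (hP.reverse hz)))
  obtain ⟨z', hz'⟩ := hQ.exists_complete hvert (hP.refl' (f z) z) (hP.refl' (f z) z)
  have H := hQ.trans hz' (hQ.symm (hf _ (hQ.right_mem hz')))
  exact ⟨z', (hs.eq_of_mem (hQ.refl hvert) H).symm⟩

theorem bijective (hs : IsStrongParallelepiped P Q) (hf : IsStructMap P Q f) :
    Function.Bijective f :=
  ⟨hf.injective hs, hf.surjective hs⟩

end IsStructMap

theorem isSplittingAt_of_isStructMap (hQ : IsWeakParallelepiped P Q) {f : X → X}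
    (hf : IsStructMap P Q f) (i a₀ : X) : IsSplittingAt P Q i a₀ (f a₀) := by
  have hP := hQ.1
  have hhor := (isStructMap_iff hQ).1 hf
  refine ⟨fun z => (i, f i, z, f z), fun z => hf.mem hQ i z, fun _ => hf.mem hQ a₀ i,
    fun z => hP.refl i z, fun x y hxy => hhor i x i y hxy, fun x₁ x₂ x₃ h => ?_⟩
  exact ⟨x₃, f x₃, hhor x₁ x₃ i x₂ h, hQ.refl (hf.mem hQ i x₃)⟩

section Splitting

variable {i w : X} {ψ : X → Quad X} {g : X → X}

theorem joinQuad_mem_of_splitting (hQ : IsWeakParallelepiped P Q)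
    (hψ : ∀ x₁ x₂ x₃, (x₁, x₃, i, x₂) ∈ P →
      ∃ c d, joinQuad ((ψ x₁).2.2.1, (ψ x₁).2.2.2, c, d) (ψ x₂) ∈ Q ∧
        joinQuad ((ψ x₁).1, (ψ x₁).2.1, c, d) (ψ x₃) ∈ Q)
    (hg : ∀ z, joinQuad (ψ z) (i, w, z, g z) ∈ Q) {a b u : X} (h : (a, b, i, u) ∈ P) :
    joinQuad (ψ u) (a, g a, b, g b) ∈ Q := by
  obtain ⟨c, d, hu, hb⟩ := hψ a u b h
  exact hQ.trans (hQ.symm hu) (hQ.comp (hQ.flip1 (hg a)) (hQ.trans hb (hg b)))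

theorem isStructMap_of_splitting (hQ : IsWeakParallelepiped P Q)
    (hfib : ∀ x y, (i, x, i, y) ∈ P → joinQuad (ψ x) (ψ y) ∈ Q)
    (hψ : ∀ x₁ x₂ x₃, (x₁, x₃, i, x₂) ∈ P →
      ∃ c d, joinQuad ((ψ x₁).2.2.1, (ψ x₁).2.2.2, c, d) (ψ x₂) ∈ Q ∧
        joinQuad ((ψ x₁).1, (ψ x₁).2.1, c, d) (ψ x₃) ∈ Q)
    (hg : ∀ z, joinQuad (ψ z) (i, w, z, g z) ∈ Q) : IsStructMap P Q g := by
  have hP := hQ.1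
  refine (isStructMap_iff hQ).2 fun a b c d hp => ?_
  obtain ⟨u, hu⟩ := hP.exists_complete a b i
  obtain ⟨u', hu'⟩ := hP.exists_complete c d i
  have huu' : (i, u, i, u') ∈ P := hP.trans (hP.trans (hP.symm hu) hp) hu'
  exact hQ.trans (hQ.symm (joinQuad_mem_of_splitting hQ hψ hg hu))
    (hQ.trans (hfib u u' huu') (joinQuad_mem_of_splitting hQ hψ hg hu'))

end Splitting

theorem exists_isStructMap_of_isSplittingAt (hs : IsStrongParallelepiped P Q) {i x y : X}
    (hsplit : IsSplittingAt P Q i x y) : ∃ f, IsStructMap P Q f ∧ f x = y := by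
  have hQ := hs.1
  have hP := hQ.1
  obtain ⟨ψ, hψP, hψs, hψπ, hfib, hψ⟩ := hsplit
  obtain ⟨w, hw⟩ : ∃ w, joinQuad (ψ x) (i, w, x, y) ∈ Q := by
    obtain ⟨w, hw⟩ := hQ.exists_complete (hP.symm (hψP x)) (hP.reverse (hψπ x))
      (hP.trans (hP.symm (hψP x)) (hP.symm (hψs x)))
    exact ⟨w, hQ.flip1 hw⟩
  have hex : ∀ z, ∃! z', joinQuad (ψ z) (i, w, z, z') ∈ Q := fun z =>
    hs.existsUnique (hψP z) (hψπ z)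
      (hP.trans (hP.symm (hψs z)) (hP.trans (hψs x) (hQ.lower_mem hw)))
  choose g hg using fun z => (hex z).exists
  exact ⟨g, isStructMap_of_splitting hQ hfib hψ hg, (hex x).unique (hg x) hw⟩

end StructureGroup

theorem transitive_iff_splits_general (X : Type)
    (P : Set (Quad X)) (Q : Set (Cube X)) (h : IsStrongParallelepiped P Q) (i : X) :
    (∀ x y : X, ∃ g ∈ structSet P Q, g x = y) ↔
      (∀ a₀ b₀ : X, IsSplittingAt P Q i a₀ b₀) := by
  constructor
  · intro htrans a₀ b₀
    obtain ⟨g, hg, rfl⟩ := htrans a₀ b₀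
    exact isSplittingAt_of_isStructMap h.1 ((mem_structSet_iff h.1).1 hg) i a₀
  · intro hsplit x y
    obtain ⟨f, hf, rfl⟩ := exists_isStructMap_of_isSplittingAt h (hsplit x y)
    exact ⟨Equiv.ofBijective f (hf.bijective h), (mem_structSet_iff h.1).2 hf, rfl⟩

/-- For a strong parallelepiped structure on `X` with basepoint `i`, the
structure group acts transitively on `X` if and only if, for every `s = ⟨a₀,b₀⟩` in the base,
the exact sequence `0 → F → P_s → B → 0` splits, i.e. there is a group homomorphism
`φ : B → P_s` with `q_s ∘ φ = id_B`. -/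
theorem transitive_iff_splits (X : Type) [Nonempty X]
    (P : Set (Quad X)) (Q : Set (Cube X)) (h : IsStrongParallelepiped P Q) (i : X) :
    (∀ x y : X, ∃ g ∈ structSet P Q, g x = y) ↔
      (∀ a₀ b₀ : X, IsSplittingAt P Q i a₀ b₀) :=
  transitive_iff_splits_general X P Q h i

end HK
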